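/- There exists N₀ > 0 such that for every N ≥ N₀ there is a constant c_N > 0 with ∑_{η ∈ Δ} ω(η,η')^{−N} ≤ c_N for all η' ∈ Δ. -/

import Mathlib

open scoped Real ENNReal

noncomputable section

/-- The discrete curvelet index set `Δ`: scale `j ∈ ℕ`, position `k ∈ ℤ²`, and
orientation `ℓ ∈ {0, …, 2^{⌊j/2⌋} - 1}`. -/
structure CurveletIndex where
  j : ℕ
  k : ℤ × ℤ
  ℓ : ℕ
  hℓ : ℓ < 2 ^ (j / 2)

namespace CurveletIndex

/-- The orientation `θ_η = π ℓ / 2^{⌊j/2⌋}`. -/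
def theta (η : CurveletIndex) : ℝ := π * η.ℓ / 2 ^ (η.j / 2)

/-- The position `b_η = R_{θ_η} D_{2^{-j}} k`, with `D_a = diag(a, √a)`. -/
def bpos (η : CurveletIndex) : ℝ × ℝ :=
  (Real.cos η.theta * ((2 : ℝ) ^ (-(η.j : ℤ)) * η.k.1) -
      Real.sin η.theta * (Real.sqrt ((2 : ℝ) ^ (-(η.j : ℤ))) * η.k.2),
   Real.sin η.theta * ((2 : ℝ) ^ (-(η.j : ℤ)) * η.k.1) +
      Real.cos η.theta * (Real.sqrt ((2 : ℝ) ^ (-(η.j : ℤ))) * η.k.2))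

end CurveletIndex

/-- Euclidean norm on `ℝ × ℝ`. -/
def e2norm (v : ℝ × ℝ) : ℝ := Real.sqrt (v.1 ^ 2 + v.2 ^ 2)

/-- Geodesic distance of `s` and `t` in `ℝ/πℤ`: the absolute value of the
representative of `s - t` modulo `π` lying in `(-π/2, π/2]`. -/
def angDistPi (s t : ℝ) : ℝ :=
  |(s - t) - π * ((⌈((s - t) - π / 2) / π⌉ : ℤ) : ℝ)|

/-- The Hart Smith distance `d_HS(η, η')`. -/
def dHS (η η' : CurveletIndex) : ℝ :=
  angDistPi η.theta η'.theta ^ 2 + e2norm (η.bpos - η'.bpos) ^ 2 +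
    |Real.cos η.theta * (η.bpos - η'.bpos).1 + Real.sin η.theta * (η.bpos - η'.bpos).2|

/-- The dyadic-parabolic pseudo-distance `ω(η, η')` of Candès–Demanet. -/
def omegaDist (η η' : CurveletIndex) : ℝ :=
  2 ^ (((η.j : ℤ) - (η'.j : ℤ)).natAbs) *
    (1 + min ((2 : ℝ) ^ η.j) ((2 : ℝ) ^ η'.j) * dHS η η')

/-!
Fix `η'`. An index `η` is determined by four integers: the scale offset `j - j'`, and the
offsets of `ℓ`, `k₁`, `k₂` from the orientation and position of `η'` read off, and rounded, in the
lattice of `η`, whose spacings are `π 2^{-⌊j/2⌋}`, `2^{-j}` along `e_η` and `2^{-j/2}` across it.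
The three terms of `d_HS` control these offsets at scale `2^{-j}`, so with `J = |j - j'|` each
offset `n` satisfies `2^J + n ≤ 4 ω(η, η')`. Hence `ω^{-6}` is at most a product of three factors
`16 (2^J + n)^{-2}`, each summing over `n ∈ ℤ` to `O(2^{-J})`, and a geometric series in `J`
remains.
-/

section
variable {α : Type*} [Field α] [LinearOrder α] [IsStrictOrderedRing α] [FloorRing α]

lemma Int.natAbs_sub_round_le (z : ℤ) (c : α) : ((z - round c).natAbs : α) ≤ 2 * |z - c| := by
  have hround : |c - round c| ≤ |(z : α) - c| := abs_sub_comm c z ▸ round_le c z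
  rw [Nat.cast_natAbs, Int.cast_abs, Int.cast_sub]
  calc |(z : α) - round c| ≤ |(z : α) - c| + |c - round c| := abs_sub_le _ _ _
    _ ≤ 2 * |(z : α) - c| := by linarith

lemma Int.natAbs_sub_round_le_sq (z : ℤ) (c : α) :
    ((z - round c).natAbs : α) ≤ 4 * |z - c| ^ 2 := by
  have h := Int.natAbs_sub_round_le z c
  have hsq : ((z - round c).natAbs : α) ≤ ((z - round c).natAbs : α) ^ 2 := by
    exact_mod_cast Nat.le_self_pow two_ne_zero _
  nlinarith [Nat.cast_nonneg (α := α) (z - round c).natAbs]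

end

lemma pow_le_pow_natAbs_sub_mul_min {α : Type*} [CommSemiring α] [LinearOrder α]
    [IsStrictOrderedRing α] {x : α} (hx : 1 ≤ x) (a b : ℕ) :
    x ^ a ≤ x ^ ((a : ℤ) - b).natAbs * min (x ^ a) (x ^ b) := by
  rcases le_total a b with hab | hab
  · rw [min_eq_left (pow_le_pow_right₀ hx hab)]
    exact le_mul_of_one_le_left (by positivity) (one_le_pow₀ hx)
  · rw [min_eq_right (pow_le_pow_right₀ hx hab), ← pow_add]
    exact le_of_eq (congrArg _ (by omega))

lemma rpow_neg_le_of_le_four_mul {x N u v w : ℝ} (hx : 1 ≤ x) (hN : 6 ≤ N)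
    (hu : 0 < u) (hv : 0 < v) (hw : 0 < w)
    (hux : u ≤ 4 * x) (hvx : v ≤ 4 * x) (hwx : w ≤ 4 * x) :
    x ^ (-N) ≤ (16 * (u ^ 2)⁻¹) * (16 * (v ^ 2)⁻¹) * (16 * (w ^ 2)⁻¹) := by
  have hinv {y : ℝ} (hy : 0 < y) (hyx : y ≤ 4 * x) : (x ^ 2)⁻¹ ≤ 16 * (y ^ 2)⁻¹ := by
    calc (x ^ 2)⁻¹ = 16 * ((4 * x) ^ 2)⁻¹ := by field_simp; ring
      _ ≤ 16 * (y ^ 2)⁻¹ := by gcongr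
  calc x ^ (-N) ≤ x ^ (-6 : ℝ) := Real.rpow_le_rpow_of_exponent_le hx (by linarith)
    _ = (x ^ 2)⁻¹ * (x ^ 2)⁻¹ * (x ^ 2)⁻¹ := by
      rw [Real.rpow_neg (by linarith)]; norm_cast; ring
    _ ≤ _ := by gcongr <;> exact hinv ‹_› ‹_›

lemma ENNReal.tsum_inv_sq_nat_add_le {s : ℕ} (hs : 0 < s) :
    ∑' n : ℕ, (((s + n : ℕ) : ℝ≥0∞) ^ 2)⁻¹ ≤ 2 / s := by
  obtain ⟨k, rfl⟩ : ∃ k, s = k + 1 := ⟨s - 1, by omega⟩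
  refine ENNReal.tsum_le_of_sum_range_le fun M => ?_
  calc ∑ n ∈ Finset.range M, (((k + 1 + n : ℕ) : ℝ≥0∞) ^ 2)⁻¹
      = ENNReal.ofReal (∑ i ∈ Finset.Ioo k (k + 1 + M), ((i : ℝ) ^ 2)⁻¹) := by
        rw [ENNReal.ofReal_sum_of_nonneg fun i _ => by positivity,
          ← Finset.Ico_add_one_left_eq_Ioo, Finset.sum_Ico_eq_sum_range]
        refine Finset.sum_congr (by congr 1; omega) fun n _ => ?_
        rw [ENNReal.ofReal_inv_of_pos (by positivity), ENNReal.ofReal_pow (by positivity),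
          ENNReal.ofReal_natCast]
    _ ≤ ENNReal.ofReal (2 / (k + 1)) := ENNReal.ofReal_le_ofReal (sum_Ioo_inv_sq_le k _)
    _ = 2 / ((k + 1 : ℕ) : ℝ≥0∞) := by
        rw [ENNReal.ofReal_div_of_pos (by positivity)]
        norm_cast

lemma ENNReal.tsum_int_natAbs_le (f : ℕ → ℝ≥0∞) :
    ∑' z : ℤ, f z.natAbs ≤ 2 * ∑' n, f n := by
  rw [tsum_of_nat_of_neg_add_one ENNReal.summable ENNReal.summable, two_mul]
  have hneg (n : ℕ) : (-((n : ℤ) + 1)).natAbs = n + 1 := by omega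
  simp only [Int.natAbs_natCast, hneg]
  exact add_le_add le_rfl (ENNReal.tsum_comp_le_tsum_of_injective (add_left_injective 1) f)

namespace CurveletIndex

open Real

lemma dHS_nonneg (η η' : CurveletIndex) : 0 ≤ dHS η η' := by
  unfold dHS; positivity

lemma one_le_omegaDist (η η' : CurveletIndex) : 1 ≤ omegaDist η η' := by
  unfold omegaDist
  exact one_le_mul_of_one_le_of_one_le (one_le_pow₀ one_le_two)
    (le_add_of_nonneg_right (mul_nonneg (by positivity) (dHS_nonneg η η')))

lemma two_pow_add_le_four_mul_omegaDist (η η' : CurveletIndex) {n : ℝ}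
    (hn : n ≤ 4 * 2 ^ η.j * dHS η η') :
    2 ^ ((η.j : ℤ) - η'.j).natAbs + n ≤ 4 * omegaDist η η' := by
  have hscale := mul_le_mul_of_nonneg_right
    (pow_le_pow_natAbs_sub_mul_min (one_le_two (α := ℝ)) η.j η'.j) (dHS_nonneg η η')
  have hJ : (1 : ℝ) ≤ 2 ^ ((η.j : ℤ) - η'.j).natAbs := one_le_pow₀ one_le_two
  unfold omegaDist
  nlinarith

lemma cos_mul_bpos_fst_add_sin_mul_bpos_snd (η : CurveletIndex) :
    cos η.theta * η.bpos.1 + sin η.theta * η.bpos.2 = 2 ^ (-(η.j : ℤ)) * η.k.1 := by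
  unfold bpos
  linear_combination 2 ^ (-(η.j : ℤ)) * (η.k.1 : ℝ) * sin_sq_add_cos_sq η.theta

lemma neg_sin_mul_bpos_fst_add_cos_mul_bpos_snd (η : CurveletIndex) :
    -sin η.theta * η.bpos.1 + cos η.theta * η.bpos.2 = √(2 ^ (-(η.j : ℤ))) * η.k.2 := by
  unfold bpos
  linear_combination √(2 ^ (-(η.j : ℤ))) * (η.k.2 : ℝ) * sin_sq_add_cos_sq η.theta

lemma sq_neg_sin_mul_add_cos_mul_le (θ : ℝ) (v : ℝ × ℝ) :
    (-sin θ * v.1 + cos θ * v.2) ^ 2 ≤ e2norm v ^ 2 := by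
  rw [e2norm, sq_sqrt (by positivity)]
  nlinarith [sq_nonneg (cos θ * v.1 + sin θ * v.2), sin_sq_add_cos_sq θ]

/-- `η.ℓ` shifted by the multiple of `2 ^ ⌊j/2⌋` that `angDistPi η.theta t` subtracts. -/
def orientCoord (η : CurveletIndex) (t : ℝ) : ℤ :=
  η.ℓ - ⌈(η.theta - t - π / 2) / π⌉ * 2 ^ (η.j / 2)

lemma orientCoord_emod (η : CurveletIndex) (t : ℝ) :
    orientCoord η t % 2 ^ (η.j / 2) = η.ℓ := by
  rw [orientCoord, Int.sub_mul_emod_self_right]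
  exact Int.emod_eq_of_lt (by positivity) (by exact_mod_cast η.hℓ)

lemma angDistPi_theta (η : CurveletIndex) (t : ℝ) :
    angDistPi η.theta t = π / 2 ^ (η.j / 2) * |orientCoord η t - 2 ^ (η.j / 2) * t / π| := by
  rw [angDistPi, ← abs_of_pos (by positivity : 0 < π / 2 ^ (η.j / 2)), ← abs_mul, orientCoord]
  congr 1
  simp only [theta]
  push_cast
  field_simp
  ring

def orientOffset (η η' : CurveletIndex) : ℤ :=
  orientCoord η η'.theta - round (2 ^ (η.j / 2) * η'.theta / π)

def posOffset₁ (η η' : CurveletIndex) : ℤ :=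
  η.k.1 - round (2 ^ η.j * (cos η.theta * η'.bpos.1 + sin η.theta * η'.bpos.2))

def posOffset₂ (η η' : CurveletIndex) : ℤ :=
  η.k.2 - round ((-sin η.theta * η'.bpos.1 + cos η.theta * η'.bpos.2) / √(2 ^ (-(η.j : ℤ))))

lemma natAbs_orientOffset_le (η η' : CurveletIndex) :
    ((orientOffset η η').natAbs : ℝ) ≤ 4 * 2 ^ η.j * dHS η η' := by
  set x := (orientCoord η η'.theta : ℝ) - 2 ^ (η.j / 2) * η'.theta / π
  have hL : ((2 : ℝ) ^ (η.j / 2)) ^ 2 ≤ 2 ^ η.j := by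
    rw [← pow_mul]; exact pow_le_pow_right₀ one_le_two (Nat.div_mul_le_self _ _)
  have hscale : 1 ≤ 2 ^ η.j * (π / 2 ^ (η.j / 2)) ^ 2 := by
    have hπ : (1 : ℝ) ≤ π ^ 2 := one_le_pow₀ (by linarith [pi_gt_three])
    rw [div_pow, mul_div_assoc', le_div_iff₀ (by positivity), one_mul]
    exact hL.trans (le_mul_of_one_le_right (by positivity) hπ)
  have hang : |x| ^ 2 ≤ 2 ^ η.j * angDistPi η.theta η'.theta ^ 2 := by
    rw [angDistPi_theta, mul_pow, ← mul_assoc]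
    exact le_mul_of_one_le_left (by positivity) hscale
  have hd : angDistPi η.theta η'.theta ^ 2 ≤ dHS η η' := by
    unfold dHS; exact le_add_of_le_of_nonneg (le_add_of_nonneg_right (sq_nonneg _)) (abs_nonneg _)
  calc ((orientOffset η η').natAbs : ℝ) ≤ 4 * |x| ^ 2 := Int.natAbs_sub_round_le_sq _ _
    _ ≤ 4 * 2 ^ η.j * dHS η η' := by
      rw [mul_assoc]; gcongr; exact hang.trans (by gcongr)

lemma natAbs_posOffset₁_le (η η' : CurveletIndex) :
    ((posOffset₁ η η').natAbs : ℝ) ≤ 4 * 2 ^ η.j * dHS η η' := by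
  set u := cos η.theta * (η.bpos - η'.bpos).1 + sin η.theta * (η.bpos - η'.bpos).2
  have hu : (η.k.1 : ℝ) - 2 ^ η.j * (cos η.theta * η'.bpos.1 + sin η.theta * η'.bpos.2) =
      2 ^ η.j * u := by
    have h := cos_mul_bpos_fst_add_sin_mul_bpos_snd η
    have hinv : (2 : ℝ) ^ η.j * 2 ^ (-(η.j : ℤ)) = 1 := by
      rw [zpow_neg, zpow_natCast, mul_inv_cancel₀ (by positivity)]
    simp only [u, Prod.fst_sub, Prod.snd_sub]
    linear_combination (-(2 : ℝ) ^ η.j) * h - (η.k.1 : ℝ) * hinv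
  have hd : |u| ≤ dHS η η' := le_add_of_nonneg_left (by positivity)
  calc ((posOffset₁ η η').natAbs : ℝ) ≤ 2 * |2 ^ η.j * u| := by
        rw [← hu]; exact Int.natAbs_sub_round_le _ _
    _ ≤ 4 * 2 ^ η.j * dHS η η' := by
      rw [abs_mul, abs_of_pos (by positivity)]
      nlinarith [abs_nonneg u, pow_pos (two_pos (α := ℝ)) η.j]

lemma natAbs_posOffset₂_le (η η' : CurveletIndex) :
    ((posOffset₂ η η').natAbs : ℝ) ≤ 4 * 2 ^ η.j * dHS η η' := by
  set s := √(2 ^ (-(η.j : ℤ)) : ℝ)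
  set v := -sin η.theta * (η.bpos - η'.bpos).1 + cos η.theta * (η.bpos - η'.bpos).2
  have hs : 2 ^ η.j * s ^ 2 = 1 := by
    rw [sq_sqrt (by positivity), zpow_neg, zpow_natCast, mul_inv_cancel₀ (by positivity)]
  have hv : s * ((η.k.2 : ℝ) - (-sin η.theta * η'.bpos.1 + cos η.theta * η'.bpos.2) / s) = v := by
    have h := neg_sin_mul_bpos_fst_add_cos_mul_bpos_snd η
    have hs0 : s ≠ 0 := (sqrt_pos.2 (by positivity)).ne'
    simp only [v, Prod.fst_sub, Prod.snd_sub]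
    field_simp
    linear_combination -h
  have hd : v ^ 2 ≤ dHS η η' :=
    (sq_neg_sin_mul_add_cos_mul_le _ _).trans
      (le_add_of_le_of_nonneg (le_add_of_nonneg_left (sq_nonneg _)) (abs_nonneg _))
  calc ((posOffset₂ η η').natAbs : ℝ)
      ≤ 4 * |(η.k.2 : ℝ) - (-sin η.theta * η'.bpos.1 + cos η.theta * η'.bpos.2) / s| ^ 2 :=
        Int.natAbs_sub_round_le_sq _ _
    _ = 4 * 2 ^ η.j * v ^ 2 := by rw [← hv, sq_abs, mul_pow, ← mul_assoc, mul_assoc 4, hs, mul_one]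
    _ ≤ 4 * 2 ^ η.j * dHS η η' := by gcongr

def relCoords (η η' : CurveletIndex) : ℤ × ℤ × ℤ × ℤ :=
  ((η.j : ℤ) - η'.j, orientOffset η η', posOffset₁ η η', posOffset₂ η η')

lemma relCoords_left_injective (η' : CurveletIndex) : Function.Injective (relCoords · η') := by
  rintro ⟨j, k, ℓ, hℓ⟩ ⟨j₂, k₂, ℓ₂, hℓ₂⟩ h
  simp only [relCoords, orientOffset, posOffset₁, posOffset₂, Prod.mk.injEq] at h
  obtain ⟨hj, hθ, hk₁, hk₂⟩ := h
  obtain rfl : j = j₂ := by omega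
  have h₁ := orientCoord_emod ⟨j, k, ℓ, hℓ⟩ η'.theta
  have h₂ := orientCoord_emod ⟨j, k₂, ℓ₂, hℓ₂⟩ η'.theta
  rw [show orientCoord ⟨j, k, ℓ, hℓ⟩ η'.theta = orientCoord ⟨j, k₂, ℓ₂, hℓ₂⟩ η'.theta by omega,
    h₂] at h₁
  obtain rfl : ℓ = ℓ₂ := by exact_mod_cast h₁.symm
  simp only [theta] at hk₁ hk₂
  obtain ⟨k₁, k₂'⟩ := k
  obtain ⟨k₂₁, k₂₂⟩ := k₂
  simp only at hk₁ hk₂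
  obtain rfl : k₁ = k₂₁ := by omega
  obtain rfl : k₂' = k₂₂ := by omega
  rfl

def dyadicWeight (J n : ℕ) : ℝ≥0∞ := 16 * (((2 ^ J + n : ℕ) : ℝ≥0∞) ^ 2)⁻¹

lemma ofReal_dyadicWeight (J n : ℕ) :
    ENNReal.ofReal (16 * (((2 ^ J + n : ℕ) : ℝ) ^ 2)⁻¹) = dyadicWeight J n := by
  rw [ENNReal.ofReal_mul (by norm_num), ENNReal.ofReal_inv_of_pos (by positivity),
    ENNReal.ofReal_pow (by positivity), ENNReal.ofReal_natCast, ENNReal.ofReal_ofNat, dyadicWeight]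

def relWeight (p : ℤ × ℤ × ℤ × ℤ) : ℝ≥0∞ :=
  dyadicWeight p.1.natAbs p.2.1.natAbs * dyadicWeight p.1.natAbs p.2.2.1.natAbs *
    dyadicWeight p.1.natAbs p.2.2.2.natAbs

lemma ofReal_omegaDist_rpow_neg_le (η η' : CurveletIndex) {N : ℝ} (hN : 6 ≤ N) :
    ENNReal.ofReal (omegaDist η η' ^ (-N)) ≤ relWeight (relCoords η η') := by
  have hoff (n : ℤ) (hn : (n.natAbs : ℝ) ≤ 4 * 2 ^ η.j * dHS η η') :
      ((2 ^ ((η.j : ℤ) - η'.j).natAbs + n.natAbs : ℕ) : ℝ) ≤ 4 * omegaDist η η' := by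
    push_cast; exact two_pow_add_le_four_mul_omegaDist η η' hn
  have h := rpow_neg_le_of_le_four_mul (one_le_omegaDist η η') hN
    (by positivity) (by positivity) (by positivity) (hoff _ (natAbs_orientOffset_le η η'))
    (hoff _ (natAbs_posOffset₁_le η η')) (hoff _ (natAbs_posOffset₂_le η η'))
  refine (ENNReal.ofReal_le_ofReal h).trans_eq ?_
  rw [ENNReal.ofReal_mul (by positivity), ENNReal.ofReal_mul (by positivity),
    ofReal_dyadicWeight, ofReal_dyadicWeight, ofReal_dyadicWeight]
  rfl

lemma tsum_int_dyadicWeight_le (J : ℕ) : ∑' z : ℤ, dyadicWeight J z.natAbs ≤ 64 * 2⁻¹ ^ J := by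
  calc ∑' z : ℤ, dyadicWeight J z.natAbs ≤ 2 * ∑' n, dyadicWeight J n :=
        ENNReal.tsum_int_natAbs_le _
    _ = 32 * ∑' n : ℕ, (((2 ^ J + n : ℕ) : ℝ≥0∞) ^ 2)⁻¹ := by
        simp_rw [dyadicWeight, ENNReal.tsum_mul_left, ← mul_assoc]; norm_num
    _ ≤ 32 * (2 / ((2 ^ J : ℕ) : ℝ≥0∞)) := by
        gcongr; exact ENNReal.tsum_inv_sq_nat_add_le (by positivity)
    _ = 64 * 2⁻¹ ^ J := by
        rw [ENNReal.div_eq_inv_mul, Nat.cast_pow, Nat.cast_ofNat, ENNReal.inv_pow]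
        ring

lemma tsum_relWeight_le : ∑' p, relWeight p ≤ 2 ^ 20 := by
  calc ∑' p, relWeight p = ∑' a : ℤ, (∑' z : ℤ, dyadicWeight a.natAbs z.natAbs) ^ 3 := by
        simp only [relWeight, ENNReal.tsum_prod', ENNReal.tsum_mul_left, ENNReal.tsum_mul_right,
          pow_three, mul_assoc]
    _ ≤ ∑' a : ℤ, 64 ^ 3 * 2⁻¹ ^ a.natAbs := by
        refine ENNReal.tsum_le_tsum fun a => ?_
        have hr : (2⁻¹ : ℝ≥0∞) ^ a.natAbs ≤ 1 := pow_le_one₀ (by simp) (by norm_num)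
        calc (∑' z : ℤ, dyadicWeight a.natAbs z.natAbs) ^ 3
            ≤ (64 * 2⁻¹ ^ a.natAbs) ^ 3 := by gcongr; exact tsum_int_dyadicWeight_le _
          _ ≤ 64 ^ 3 * 2⁻¹ ^ a.natAbs := by
            rw [mul_pow]; exact mul_le_mul_right (pow_le_of_le_one zero_le hr three_ne_zero) _
    _ ≤ 2 * ∑' J : ℕ, 64 ^ 3 * 2⁻¹ ^ J := ENNReal.tsum_int_natAbs_le _
    _ = 2 ^ 20 := by
        rw [ENNReal.tsum_mul_left, ENNReal.tsum_geometric, ENNReal.one_sub_inv_two, inv_inv]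
        norm_num

end CurveletIndex

/-- Lemma 6.2 (Candès–Demanet): summability of negative powers of the
dyadic-parabolic pseudo-distance, uniformly in the second index. -/
theorem omegaDist_summable :
    ∃ N₀ : ℝ, 0 < N₀ ∧ ∀ N : ℝ, N₀ ≤ N → ∃ c : ℝ, 0 < c ∧
      ∀ η' : CurveletIndex,
        (∑' η : CurveletIndex, ENNReal.ofReal (omegaDist η η' ^ (-N))) ≤
          ENNReal.ofReal c := by
  refine ⟨6, by norm_num, fun N hN => ⟨2 ^ 20, by positivity, fun η' => ?_⟩⟩
  calc ∑' η : CurveletIndex, ENNReal.ofReal (omegaDist η η' ^ (-N))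
      ≤ ∑' η, CurveletIndex.relWeight (CurveletIndex.relCoords η η') :=
        ENNReal.tsum_le_tsum fun η => CurveletIndex.ofReal_omegaDist_rpow_neg_le η η' hN
    _ ≤ ∑' p, CurveletIndex.relWeight p :=
        ENNReal.tsum_comp_le_tsum_of_injective (CurveletIndex.relCoords_left_injective η') _
    _ ≤ 2 ^ 20 := CurveletIndex.tsum_relWeight_le
    _ = ENNReal.ofReal (2 ^ 20) := by norm_num
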